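/- arXiv:2201.02812 — 4 statements merged into one kernel-verified Lean document; each statement's English description precedes it below -/
import Mathlib

section
/- Let s ≥ 0 and α > 0 be real numbers. Define x* := ξ if (1+s)^2 > 4α, ξ > 0, and f(ξ) ≤ f(0); and x* := 0 otherwise. Then x* is a global minimizer of f on [0, ∞), i.e., f(x*) ≤ f(x) for all x ≥ 0. -/
/-!
The derivative of `f` is `q(x) / (1 + x)` with `q(y) = y² + (1 - s) y + (α - s)`, whose discriminant
is `(1 + s)² - 4α` and whose larger root is `ξ`. If the discriminant is nonpositive, or if `ξ ≤ 0`, then `f` is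
nondecreasing on `[0, ∞)` and `0` is the minimizer. Otherwise `f` increases up to the smaller root,
decreases between the roots and increases after `ξ`, so the minimum over `[0, ∞)` is attained at `0`
or at `ξ`, whichever has the smaller value.
-/

open Set

noncomputable section

namespace LogShrink

variable {s α : ℝ}

def objective (s α x : ℝ) : ℝ := 1 / 2 * (x - s) ^ 2 + α * Real.log (1 + x)

def numerator (s α y : ℝ) : ℝ := y ^ 2 + (1 - s) * y + (α - s)

def largeRoot (s α : ℝ) : ℝ := (s - 1) / 2 + √((1 + s) ^ 2 / 4 - α)

def smallRoot (s α : ℝ) : ℝ := (s - 1) / 2 - √((1 + s) ^ 2 / 4 - α)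

lemma hasDerivAt_objective {x : ℝ} (hx : -1 < x) :
    HasDerivAt (objective s α) (numerator s α x / (1 + x)) x := by
  have h1x : 1 + x ≠ 0 := by linarith
  have hsq : HasDerivAt (fun y : ℝ => 1 / 2 * (y - s) ^ 2) (x - s) x := by
    simpa using (((hasDerivAt_id x).sub_const s).pow 2).const_mul (1 / 2 : ℝ)
  have hlog : HasDerivAt (fun y : ℝ => Real.log (1 + y)) (1 / (1 + x)) x := by
    simpa using ((hasDerivAt_id x).const_add 1).log h1x
  refine (hsq.add (hlog.const_mul α)).congr_deriv ?_
  unfold numerator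
  field_simp
  ring

lemma monotoneOn_objective {D : Set ℝ} (hD : Convex ℝ D) (hD₁ : D ⊆ Ioi (-1))
    (hq : ∀ y ∈ D, 0 ≤ numerator s α y) : MonotoneOn (objective s α) D :=
  monotoneOn_of_hasDerivWithinAt_nonneg hD
    (fun y hy => (hasDerivAt_objective (hD₁ hy)).continuousAt.continuousWithinAt)
    (fun y hy => (hasDerivAt_objective (hD₁ (interior_subset hy))).hasDerivWithinAt)
    (fun y hy => div_nonneg (hq y (interior_subset hy))
      (by linarith [mem_Ioi.1 (hD₁ (interior_subset hy))]))

lemma antitoneOn_objective {D : Set ℝ} (hD : Convex ℝ D) (hD₁ : D ⊆ Ioi (-1))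
    (hq : ∀ y ∈ D, numerator s α y ≤ 0) : AntitoneOn (objective s α) D :=
  antitoneOn_of_hasDerivWithinAt_nonpos hD
    (fun y hy => (hasDerivAt_objective (hD₁ hy)).continuousAt.continuousWithinAt)
    (fun y hy => (hasDerivAt_objective (hD₁ (interior_subset hy))).hasDerivWithinAt)
    (fun y hy => div_nonpos_of_nonpos_of_nonneg (hq y (interior_subset hy))
      (by linarith [mem_Ioi.1 (hD₁ (interior_subset hy))]))

lemma numerator_nonneg_of_le (hD : (1 + s) ^ 2 ≤ 4 * α) (y : ℝ) : 0 ≤ numerator s α y := by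
  unfold numerator
  nlinarith [sq_nonneg (y + (1 - s) / 2)]

lemma numerator_eq_mul (hD : 4 * α ≤ (1 + s) ^ 2) (y : ℝ) :
    numerator s α y = (y - largeRoot s α) * (y - smallRoot s α) := by
  have hr : √((1 + s) ^ 2 / 4 - α) ^ 2 = (1 + s) ^ 2 / 4 - α := Real.sq_sqrt (by linarith)
  unfold numerator largeRoot smallRoot
  linear_combination hr

lemma smallRoot_le_largeRoot : smallRoot s α ≤ largeRoot s α := by
  unfold smallRoot largeRoot
  linarith [Real.sqrt_nonneg ((1 + s) ^ 2 / 4 - α)]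

lemma Ici_subset_Ioi_neg_one {a : ℝ} (ha : 0 ≤ a) : Ici a ⊆ Ioi (-1) :=
  Ici_subset_Ioi.2 (by linarith)

lemma objective_zero_le_or_largeRoot_le {x : ℝ} (hx : 0 ≤ x) :
    objective s α 0 ≤ objective s α x ∨
      ((1 + s) ^ 2 > 4 * α ∧ 0 < largeRoot s α ∧ objective s α (largeRoot s α) ≤ objective s α x) := by
  have mono_from_zero (hq : ∀ y ∈ Ici (0 : ℝ), 0 ≤ numerator s α y) :
      objective s α 0 ≤ objective s α x :=
    monotoneOn_objective (convex_Ici 0) (Ici_subset_Ioi_neg_one le_rfl) hq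
      self_mem_Ici hx hx
  by_cases hD : (1 + s) ^ 2 > 4 * α
  swap
  · exact Or.inl (mono_from_zero fun y _ => numerator_nonneg_of_le (not_lt.1 hD) y)
  set ξ := largeRoot s α
  set ξ₂ := smallRoot s α
  have hfact := numerator_eq_mul hD.le
  have hξ₂ : ξ₂ ≤ ξ := smallRoot_le_largeRoot
  by_cases hξ : 0 < ξ
  swap
  · refine Or.inl (mono_from_zero fun y (hy : 0 ≤ y) => ?_)
    rw [hfact]
    exact mul_nonneg (by linarith) (by linarith)
  rcases le_total ξ x with hξx | hxξ
  · refine Or.inr ⟨hD, hξ, ?_⟩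
    refine monotoneOn_objective (convex_Ici ξ) (Ici_subset_Ioi_neg_one hξ.le)
      (fun y (hy : ξ ≤ y) => ?_) self_mem_Ici hξx hξx
    rw [hfact]
    exact mul_nonneg (by linarith) (by linarith)
  rcases le_total x ξ₂ with hxξ₂ | hξ₂x
  · refine Or.inl (monotoneOn_objective (convex_Icc 0 ξ₂)
      ((Icc_subset_Ici_self).trans (Ici_subset_Ioi_neg_one le_rfl))
      (fun y hy => ?_) ⟨le_rfl, hx.trans hxξ₂⟩ ⟨hx, hxξ₂⟩ hx)
    rw [hfact]
    exact mul_nonneg_of_nonpos_of_nonpos (by linarith [hy.2]) (by linarith [hy.2])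
  · refine Or.inr ⟨hD, hξ, antitoneOn_objective (convex_Icc x ξ)
      ((Icc_subset_Ici_self).trans (Ici_subset_Ioi_neg_one hx))
      (fun y hy => ?_) ⟨le_rfl, hxξ⟩ ⟨hxξ, le_rfl⟩ hxξ⟩
    rw [hfact]
    exact mul_nonpos_of_nonpos_of_nonneg (by linarith [hy.2]) (by linarith [hy.1])

end LogShrink

end

theorem scalar_shrinkage_minimizer_general (s α : ℝ)
    (f : ℝ → ℝ) (hf : ∀ x, f x = (1 / 2) * (x - s) ^ 2 + α * Real.log (1 + x))
    (ξ : ℝ) (hξ : ξ = (s - 1) / 2 + Real.sqrt ((1 + s) ^ 2 / 4 - α))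
    (xstar : ℝ)
    (hxstar : xstar = if (1 + s) ^ 2 > 4 * α ∧ 0 < ξ ∧ f ξ ≤ f 0 then ξ else 0) :
    ∀ x : ℝ, 0 ≤ x → f xstar ≤ f x := by
  obtain rfl : f = LogShrink.objective s α := funext hf
  obtain rfl : ξ = LogShrink.largeRoot s α := hξ
  intro x hx
  subst hxstar
  rcases LogShrink.objective_zero_le_or_largeRoot_le hx with h0 | ⟨hD, hpos, hξx⟩
  · split_ifs with hc
    · exact hc.2.2.trans h0
    · exact h0
  · split_ifs with hc
    · exact hξx
    · exact (lt_of_not_ge fun h => hc ⟨hD, hpos, h⟩).le.trans hξx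

/-- Scalar shrinkage rule: for `s ≥ 0`, `α > 0`,
`f(x) = (1/2)(x-s)² + α log(1+x)` and `ξ = (s-1)/2 + √((1+s)²/4 - α)`,
the point `x* = ξ` if `(1+s)² > 4α`, `ξ > 0` and `f(ξ) ≤ f(0)`, else `x* = 0`,
is a global minimizer of `f` on `[0, ∞)`. -/
theorem scalar_shrinkage_minimizer (s α : ℝ) (hs : 0 ≤ s) (hα : 0 < α)
    (f : ℝ → ℝ) (hf : ∀ x, f x = (1 / 2) * (x - s) ^ 2 + α * Real.log (1 + x))
    (ξ : ℝ) (hξ : ξ = (s - 1) / 2 + Real.sqrt ((1 + s) ^ 2 / 4 - α))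
    (xstar : ℝ)
    (hxstar : xstar = if (1 + s) ^ 2 > 4 * α ∧ 0 < ξ ∧ f ξ ≤ f 0 then ξ else 0) :
    ∀ x : ℝ, 0 ≤ x → f xstar ≤ f x :=
  scalar_shrinkage_minimizer_general s α f hf ξ hξ xstar hxstar
end

section
/- Let y ∈ ℝ^d and α > 0, and set s := ‖y‖_2. Define f(x) := (1/2)(x − s)^2 + α·log(1+x) and, when (1+s)^2 > 4α, ξ := (s − 1)/2 + sqrt((1+s)^2/4 − α). Define w* := (ξ/‖y‖_2)·y if f(ξ) ≤ f(0), (1+s)^2 > 4α, and ξ > 0; and w* := 0 otherwise. Then w* is a global minimizer of w ↦ (1/2)‖y − w‖_2^2 + α·log(1 + ‖w‖_2) over w ∈ ℝ^d. -/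
/-!
By the reverse triangle inequality `‖y - w‖ ≥ |‖w‖ - ‖y‖|`, the objective at `w` is at least
`f ‖w‖`, with equality on the ray through `y`; so it suffices to minimize `f` over `[0, ∞)`.
There `f' x = q x / (1 + x)` with `q x = x² + (1 - s) x + (α - s)`, whose roots are `ξ` and
`s - 1 - ξ`. Hence `f` increases, then decreases up to `ξ`, then increases again, and its
minimum over `[0, ∞)` is attained at `0` or at `ξ`; if `q` has no root `ξ > 0`, `f` is
nondecreasing on `[0, ∞)`.
-/

open Set

noncomputable def l2logProfile (s α x : ℝ) : ℝ :=
  (1 / 2) * (x - s) ^ 2 + α * Real.log (1 + x)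

namespace l2logProfile

variable {s α : ℝ}

theorem hasDerivAt {x : ℝ} (hx : -1 < x) :
    HasDerivAt (l2logProfile s α) ((x ^ 2 + (1 - s) * x + (α - s)) / (1 + x)) x := by
  have hx' : 1 + x ≠ 0 := by linarith
  have hsq := (((hasDerivAt_id x).sub_const s).pow 2).const_mul (1 / 2 : ℝ)
  have hlog := ((Real.hasDerivAt_log hx').comp x ((hasDerivAt_id x).const_add 1)).const_mul α
  refine (hsq.add hlog).congr_deriv ?_
  simp only [id, Nat.cast_ofNat, mul_one]
  field_simp
  ring

theorem continuousOn_Icc {a b : ℝ} (ha : -1 < a) : ContinuousOn (l2logProfile s α) (Icc a b) :=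
  fun x hx => (hasDerivAt (by linarith [hx.1])).continuousAt.continuousWithinAt

theorem monotoneOn {a b : ℝ} (ha : -1 < a)
    (hq : ∀ x ∈ Ioo a b, 0 ≤ x ^ 2 + (1 - s) * x + (α - s)) :
    MonotoneOn (l2logProfile s α) (Icc a b) := by
  refine monotoneOn_of_hasDerivWithinAt_nonneg
    (f' := fun x => (x ^ 2 + (1 - s) * x + (α - s)) / (1 + x)) (convex_Icc a b)
    (continuousOn_Icc ha) (fun x hx => ?_) (fun x hx => ?_)
  all_goals rw [interior_Icc] at hx
  · exact (hasDerivAt (by linarith [hx.1])).hasDerivWithinAt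
  · exact div_nonneg (hq x hx) (by linarith [hx.1])

theorem antitoneOn {a b : ℝ} (ha : -1 < a)
    (hq : ∀ x ∈ Ioo a b, x ^ 2 + (1 - s) * x + (α - s) ≤ 0) :
    AntitoneOn (l2logProfile s α) (Icc a b) := by
  refine antitoneOn_of_hasDerivWithinAt_nonpos
    (f' := fun x => (x ^ 2 + (1 - s) * x + (α - s)) / (1 + x)) (convex_Icc a b)
    (continuousOn_Icc ha) (fun x hx => ?_) (fun x hx => ?_)
  all_goals rw [interior_Icc] at hx
  · exact (hasDerivAt (by linarith [hx.1])).hasDerivWithinAt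
  · exact div_nonpos_of_nonpos_of_nonneg (hq x hx) (by linarith [hx.1])

theorem numerator_eq_mul_of_root {ξ : ℝ} (hroot : ξ ^ 2 + (1 - s) * ξ + (α - s) = 0) (x : ℝ) :
    x ^ 2 + (1 - s) * x + (α - s) = (x - ξ) * (x - (s - 1 - ξ)) := by
  linear_combination hroot

theorem numerator_eq_zero {ξ : ℝ} (hξ : ξ = (s - 1) / 2 + √((1 + s) ^ 2 / 4 - α))
    (hdisc : 4 * α ≤ (1 + s) ^ 2) : ξ ^ 2 + (1 - s) * ξ + (α - s) = 0 := by
  have hr := Real.sq_sqrt (show 0 ≤ (1 + s) ^ 2 / 4 - α by linarith)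
  rw [hξ]
  linear_combination hr

theorem ne_zero_of_root_pos {ξ : ℝ} (hα : 0 < α)
    (hξ : ξ = (s - 1) / 2 + √((1 + s) ^ 2 / 4 - α))
    (hpos : 0 < ξ) : s ≠ 0 := by
  rintro rfl
  have : √((1 + 0) ^ 2 / 4 - α) < 1 / 2 := (Real.sqrt_lt' (by norm_num)).2 (by linarith)
  linarith

theorem min_le_of_root {ξ t : ℝ} (hroot : ξ ^ 2 + (1 - s) * ξ + (α - s) = 0) (hξ : -1 < ξ)
    (hξ' : s - 1 - ξ ≤ ξ) (ht : 0 ≤ t) :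
    min (l2logProfile s α 0) (l2logProfile s α ξ) ≤ l2logProfile s α t := by
  have hfac := numerator_eq_mul_of_root hroot
  rcases le_total ξ t with hξt | htξ
  · refine (min_le_right _ _).trans <| monotoneOn hξ (fun x hx => ?_)
      (left_mem_Icc.2 hξt) (right_mem_Icc.2 hξt) hξt
    rw [hfac]
    exact mul_nonneg (by linarith [hx.1]) (by linarith [hx.1])
  rcases le_total (s - 1 - ξ) t with ht' | ht'
  · refine (min_le_right _ _).trans <| antitoneOn (by linarith) (fun x hx => ?_)
      (left_mem_Icc.2 htξ) (right_mem_Icc.2 htξ) htξ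
    rw [hfac]
    exact mul_nonpos_of_nonpos_of_nonneg (by linarith [hx.2]) (by linarith [hx.1])
  · refine (min_le_left _ _).trans <| monotoneOn (by norm_num) (fun x hx => ?_)
      (left_mem_Icc.2 ht) (right_mem_Icc.2 ht) ht
    rw [hfac]
    exact mul_nonneg_of_nonpos_of_nonpos (by linarith [hx.2]) (by linarith [hx.2])

theorem apply_zero_le {t : ℝ} (hq : ∀ x, 0 ≤ x → 0 ≤ x ^ 2 + (1 - s) * x + (α - s))
    (ht : 0 ≤ t) :
    l2logProfile s α 0 ≤ l2logProfile s α t :=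
  monotoneOn (by norm_num) (fun x hx => hq x hx.1.le) (left_mem_Icc.2 ht) (right_mem_Icc.2 ht) ht

theorem shrink_le {ξ t : ℝ} (hξ : ξ = (s - 1) / 2 + √((1 + s) ^ 2 / 4 - α)) (ht : 0 ≤ t) :
    l2logProfile s α (if l2logProfile s α ξ ≤ l2logProfile s α 0 ∧ (1 + s) ^ 2 > 4 * α ∧ 0 < ξ
      then ξ else 0) ≤ l2logProfile s α t := by
  have hξ' : s - 1 - ξ ≤ ξ := by linarith [Real.sqrt_nonneg ((1 + s) ^ 2 / 4 - α)]
  by_cases hreal : (1 + s) ^ 2 > 4 * α ∧ 0 < ξ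
  · have hmin := min_le_of_root (numerator_eq_zero hξ hreal.1.le) (by linarith) hξ' ht
    split_ifs with h
    · rwa [min_eq_right h.1] at hmin
    · rwa [min_eq_left (le_of_not_ge fun h' => h ⟨h', hreal⟩)] at hmin
  rw [if_neg fun h => hreal h.2]
  refine apply_zero_le (fun x hx => ?_) ht
  rcases le_or_gt ((1 + s) ^ 2) (4 * α) with hdisc | hdisc
  · nlinarith [sq_nonneg (x - (s - 1) / 2)]
  · have hξ0 : ξ ≤ 0 := le_of_not_gt fun h => hreal ⟨hdisc, h⟩
    rw [numerator_eq_mul_of_root (numerator_eq_zero hξ hdisc.le)]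
    exact mul_nonneg (by linarith) (by linarith)

end l2logProfile

theorem l2logProfile_norm_le {E : Type*} [SeminormedAddCommGroup E] (α : ℝ) (y w : E) :
    l2logProfile ‖y‖ α ‖w‖ ≤ 1 / 2 * ‖y - w‖ ^ 2 + α * Real.log (1 + ‖w‖) := by
  have : (‖w‖ - ‖y‖) ^ 2 ≤ ‖y - w‖ ^ 2 :=
    sq_le_sq.2 (by rw [abs_norm, norm_sub_rev]; exact abs_norm_sub_norm_le w y)
  unfold l2logProfile
  linarith

theorem l2logProfile_eq_of_smul {E : Type*} [NormedAddCommGroup E] [NormedSpace ℝ E]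
    (α : ℝ) {y : E} (hy : y ≠ 0) {m : ℝ} (hm : 0 ≤ m) :
    1 / 2 * ‖y - (m / ‖y‖) • y‖ ^ 2 + α * Real.log (1 + ‖(m / ‖y‖) • y‖) =
      l2logProfile ‖y‖ α m := by
  have hy' : ‖y‖ ≠ 0 := norm_ne_zero_iff.2 hy
  have hnorm : ‖(m / ‖y‖) • y‖ = m := by
    rw [norm_smul, Real.norm_eq_abs, abs_of_nonneg (by positivity), div_mul_cancel₀ _ hy']
  have hsub : ‖y - (m / ‖y‖) • y‖ ^ 2 = (m - ‖y‖) ^ 2 := by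
    rw [show y - (m / ‖y‖) • y = (1 - m / ‖y‖) • y by rw [sub_smul, one_smul], norm_smul,
      Real.norm_eq_abs, mul_pow, sq_abs]
    field_simp
    ring
  rw [hnorm, hsub, l2logProfile]

/-- Vector case of the `ℓ_{2,log}`-shrinkage operator: with `s = ‖y‖₂`,
`f(x) = (1/2)(x-s)² + α log(1+x)`, `ξ = (s-1)/2 + √((1+s)²/4 - α)`, the vector
`w* = (ξ/‖y‖₂) • y` if `f(ξ) ≤ f(0)`, `(1+s)² > 4α` and `ξ > 0`, else `w* = 0`,
globally minimizes `w ↦ (1/2)‖y - w‖₂² + α log(1 + ‖w‖₂)`. -/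
theorem vector_l2log_shrinkage {d : ℕ} (y : EuclideanSpace ℝ (Fin d)) (α : ℝ) (hα : 0 < α)
    (s : ℝ) (hs : s = ‖y‖)
    (f : ℝ → ℝ) (hf : ∀ x, f x = (1 / 2) * (x - s) ^ 2 + α * Real.log (1 + x))
    (ξ : ℝ) (hξ : ξ = (s - 1) / 2 + Real.sqrt ((1 + s) ^ 2 / 4 - α))
    (wstar : EuclideanSpace ℝ (Fin d))
    (hwstar : wstar =
      if f ξ ≤ f 0 ∧ (1 + s) ^ 2 > 4 * α ∧ 0 < ξ then (ξ / ‖y‖) • y else 0) :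
    ∀ w : EuclideanSpace ℝ (Fin d),
      (1 / 2) * ‖y - wstar‖ ^ 2 + α * Real.log (1 + ‖wstar‖) ≤
        (1 / 2) * ‖y - w‖ ^ 2 + α * Real.log (1 + ‖w‖) := by
  intro w
  obtain rfl : f = l2logProfile s α := funext hf
  subst hs hwstar
  calc _ = l2logProfile ‖y‖ α (if l2logProfile ‖y‖ α ξ ≤ l2logProfile ‖y‖ α 0 ∧
          (1 + ‖y‖) ^ 2 > 4 * α ∧ 0 < ξ then ξ else 0) := by
        split_ifs with h
        · have hy : y ≠ 0 := norm_ne_zero_iff.1 (l2logProfile.ne_zero_of_root_pos hα hξ h.2.2)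
          exact l2logProfile_eq_of_smul α hy h.2.2.le
        · simp [l2logProfile]
    _ ≤ l2logProfile ‖y‖ α ‖w‖ := l2logProfile.shrink_le hξ (norm_nonneg w)
    _ ≤ _ := l2logProfile_norm_le α y w
end

section
/- (ℓ_{2,log}-shrinkage operator.) Let Y be a real d×n matrix with columns y_1, …, y_n and let α > 0. For each j, set s_j := ‖y_j‖_2, f_j(x) := (1/2)(x − s_j)^2 + α·log(1+x), and, when (1+s_j)^2 > 4α, ξ_j := (s_j − 1)/2 + sqrt((1+s_j)^2/4 − α). Define the matrix W* whose j-th column is w*_j := (ξ_j/‖y_j‖_2)·y_j if f_j(ξ_j) ≤ f_j(0), (1+s_j)^2 > 4α, and ξ_j > 0; and w*_j := 0 otherwise. Then W* is a global minimizer over all real d×n matrices W of the objective (1/2)‖Y − W‖_F^2 + α‖W‖_{2,log}, where ‖·‖_F is the Frobenius norm. -/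
/-!
Both terms of the objective split over the columns, so it suffices to minimize
`½‖y - w‖² + α log (1 + ‖w‖)` for a single column `y`. By the reverse triangle inequality this
is at least `F ‖w‖`, where `F x = ½ (x - ‖y‖)² + α log (1 + x)`, with equality when `w` is a
nonnegative multiple of `y`. On `[0, ∞)` the derivative of `F` has the sign of
`(x - ξ₋) (x - ξ)`, where `ξ₋ ≤ ξ` are the roots of `x² + (1 - ‖y‖) x + α - ‖y‖`, so the minimum
of `F` over `[0, ∞)` is attained at `0` or at `ξ`. Since `α ≥ 0` forces `ξ ≤ ‖y‖`, the
rescaling of `y` by `ξ / ‖y‖` realizes this minimum, also when `y = 0`.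
-/

open scoped Classical

/-- The `ℓ_{2,log}` (pseudo) norm of a real `d × n` matrix:
`‖A‖_{2,log} = ∑ⱼ log (1 + ‖aⱼ‖₂)`, where `aⱼ` is the `j`-th column. -/
noncomputable def l2logNorm {d n : ℕ} (A : Matrix (Fin d) (Fin n) ℝ) : ℝ :=
  ∑ j, Real.log (1 + Real.sqrt (∑ i, A i j ^ 2))

open Real Set

noncomputable def scalarLogObjective (s α x : ℝ) : ℝ := 1 / 2 * (x - s) ^ 2 + α * log (1 + x)

noncomputable def logShrinkRoot (s α : ℝ) : ℝ := (s - 1) / 2 + √((1 + s) ^ 2 / 4 - α)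

noncomputable def logShrink (s α : ℝ) : ℝ :=
  if scalarLogObjective s α (logShrinkRoot s α) ≤ scalarLogObjective s α 0 ∧
      (1 + s) ^ 2 > 4 * α ∧ 0 < logShrinkRoot s α
  then logShrinkRoot s α else 0

section Scalar

variable {s α : ℝ}

theorem hasDerivAt_scalarLogObjective {t : ℝ} (ht : -1 < t) :
    HasDerivAt (scalarLogObjective s α) ((t ^ 2 + (1 - s) * t + (α - s)) / (1 + t)) t := by
  have h1t : 1 + t ≠ 0 := by linarith
  have hquad := (((hasDerivAt_id t).sub_const s).pow 2).const_mul (1 / 2 : ℝ)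
  have hlog := (((hasDerivAt_id t).const_add 1).log h1t).const_mul α
  refine (hquad.add hlog).congr_deriv ?_
  simp only [id]
  field_simp
  ring

theorem monotoneOn_scalarLogObjective {D : Set ℝ} (hD : Convex ℝ D) (hD₁ : D ⊆ Ioi (-1))
    (hq : ∀ t ∈ interior D, 0 ≤ t ^ 2 + (1 - s) * t + (α - s)) :
    MonotoneOn (scalarLogObjective s α) D :=
  monotoneOn_of_hasDerivWithinAt_nonneg hD
    (fun t ht => (hasDerivAt_scalarLogObjective (hD₁ ht)).continuousAt.continuousWithinAt)
    (fun t ht => (hasDerivAt_scalarLogObjective (hD₁ (interior_subset ht))).hasDerivWithinAt)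
    (fun t ht => div_nonneg (hq t ht) (by linarith [mem_Ioi.mp (hD₁ (interior_subset ht))]))

theorem antitoneOn_scalarLogObjective {D : Set ℝ} (hD : Convex ℝ D) (hD₁ : D ⊆ Ioi (-1))
    (hq : ∀ t ∈ interior D, t ^ 2 + (1 - s) * t + (α - s) ≤ 0) :
    AntitoneOn (scalarLogObjective s α) D :=
  antitoneOn_of_hasDerivWithinAt_nonpos hD
    (fun t ht => (hasDerivAt_scalarLogObjective (hD₁ ht)).continuousAt.continuousWithinAt)
    (fun t ht => (hasDerivAt_scalarLogObjective (hD₁ (interior_subset ht))).hasDerivWithinAt)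
    (fun t ht => div_nonpos_of_nonpos_of_nonneg (hq t ht)
      (by linarith [mem_Ioi.mp (hD₁ (interior_subset ht))]))

theorem sub_one_sub_logShrinkRoot_le : s - 1 - logShrinkRoot s α ≤ logShrinkRoot s α := by
  unfold logShrinkRoot
  linarith [sqrt_nonneg ((1 + s) ^ 2 / 4 - α)]

-- The roots sum to `s - 1`, so the smaller one is `s - 1 - logShrinkRoot s α`.
theorem quadratic_eq_mul_of_le (h : 4 * α ≤ (1 + s) ^ 2) (t : ℝ) :
    t ^ 2 + (1 - s) * t + (α - s) =
      (t - (s - 1 - logShrinkRoot s α)) * (t - logShrinkRoot s α) := by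
  have hr := sq_sqrt (show 0 ≤ (1 + s) ^ 2 / 4 - α by linarith)
  unfold logShrinkRoot
  linear_combination hr

theorem quadratic_nonneg_of_le (h : (1 + s) ^ 2 ≤ 4 * α) (t : ℝ) :
    0 ≤ t ^ 2 + (1 - s) * t + (α - s) := by
  nlinarith [sq_nonneg (t + (1 - s) / 2)]

theorem Ici_zero_subset_Ioi : Ici (0 : ℝ) ⊆ Ioi (-1) := Ici_subset_Ioi.mpr (by norm_num)

theorem scalarLogObjective_zero_le {x : ℝ}
    (hroot : (1 + s) ^ 2 ≤ 4 * α ∨ logShrinkRoot s α ≤ 0) (hx : 0 ≤ x) :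
    scalarLogObjective s α 0 ≤ scalarLogObjective s α x := by
  refine monotoneOn_scalarLogObjective (convex_Ici 0) Ici_zero_subset_Ioi ?_
    self_mem_Ici hx hx
  intro t ht
  rw [interior_Ici, mem_Ioi] at ht
  rcases le_or_gt ((1 + s) ^ 2) (4 * α) with hdisc | hdisc
  · exact quadratic_nonneg_of_le hdisc t
  · have hξ := hroot.resolve_left hdisc.not_ge
    rw [quadratic_eq_mul_of_le hdisc.le]
    have hroots := sub_one_sub_logShrinkRoot_le (s := s) (α := α)
    exact mul_nonneg (by linarith) (by linarith)

theorem min_scalarLogObjective_le {x : ℝ} (hdisc : 4 * α ≤ (1 + s) ^ 2)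
    (hξ : 0 < logShrinkRoot s α) (hx : 0 ≤ x) :
    min (scalarLogObjective s α 0) (scalarLogObjective s α (logShrinkRoot s α)) ≤
      scalarLogObjective s α x := by
  set ξ := logShrinkRoot s α
  have hfac := quadratic_eq_mul_of_le hdisc
  have hroots : s - 1 - ξ ≤ ξ := sub_one_sub_logShrinkRoot_le
  rcases le_or_gt ξ x with hξx | hxξ
  · refine (min_le_right _ _).trans <| monotoneOn_scalarLogObjective (convex_Ici ξ)
      ((Ici_subset_Ici.mpr hξ.le).trans Ici_zero_subset_Ioi) ?_ self_mem_Ici hξx hξx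
    intro t ht
    rw [interior_Ici, mem_Ioi] at ht
    rw [hfac]
    exact mul_nonneg (by linarith) (by linarith)
  rcases le_or_gt x (s - 1 - ξ) with hxlow | hxlow
  · refine (min_le_left _ _).trans <| monotoneOn_scalarLogObjective (convex_Icc 0 (s - 1 - ξ))
      (Icc_subset_Ici_self.trans Ici_zero_subset_Ioi) ?_ ⟨le_rfl, hx.trans hxlow⟩ ⟨hx, hxlow⟩ hx
    intro t ht
    rw [interior_Icc, mem_Ioo] at ht
    rw [hfac]
    exact mul_nonneg_of_nonpos_of_nonpos (by linarith) (by linarith)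
  · refine (min_le_right _ _).trans <| antitoneOn_scalarLogObjective (convex_Icc x ξ)
      ((Icc_subset_Ici_iff hxξ.le).mpr hx |>.trans Ici_zero_subset_Ioi) ?_
      ⟨le_rfl, hxξ.le⟩ ⟨hxξ.le, le_rfl⟩ hxξ.le
    intro t ht
    rw [interior_Icc, mem_Ioo] at ht
    rw [hfac]
    exact mul_nonpos_of_nonneg_of_nonpos (by linarith) (by linarith)

theorem isMinOn_logShrink : IsMinOn (scalarLogObjective s α) (Ici 0) (logShrink s α) := by
  intro x hx
  have hx : 0 ≤ x := hx
  unfold logShrink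
  split_ifs with hchoice
  · exact (le_min hchoice.1 le_rfl).trans
      (min_scalarLogObjective_le hchoice.2.1.le hchoice.2.2 hx)
  by_cases hroot : (1 + s) ^ 2 > 4 * α ∧ 0 < logShrinkRoot s α
  · have h0 : scalarLogObjective s α 0 < scalarLogObjective s α (logShrinkRoot s α) :=
      lt_of_not_ge fun h => hchoice ⟨h, hroot⟩
    exact (le_min le_rfl h0.le).trans (min_scalarLogObjective_le hroot.1.le hroot.2 hx)
  · rw [not_and_or, not_lt, not_lt] at hroot
    exact scalarLogObjective_zero_le hroot hx

theorem logShrink_nonneg : 0 ≤ logShrink s α := by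
  unfold logShrink
  split_ifs with h
  exacts [h.2.2.le, le_rfl]

theorem logShrinkRoot_le (hα : 0 ≤ α) (hs : 0 ≤ s) : logShrinkRoot s α ≤ s := by
  have : √((1 + s) ^ 2 / 4 - α) ≤ (1 + s) / 2 := by
    rw [show (1 + s) ^ 2 / 4 = ((1 + s) / 2) ^ 2 by ring]
    exact (sqrt_le_sqrt (by linarith)).trans_eq (sqrt_sq (by linarith))
  unfold logShrinkRoot
  linarith

theorem logShrink_le (hα : 0 ≤ α) (hs : 0 ≤ s) : logShrink s α ≤ s := by
  unfold logShrink
  split_ifs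
  exacts [logShrinkRoot_le hα hs, hs]

end Scalar

section Vector

variable {E : Type*} [SeminormedAddCommGroup E]

noncomputable def vectorLogObjective (α : ℝ) (y w : E) : ℝ :=
  1 / 2 * ‖y - w‖ ^ 2 + α * log (1 + ‖w‖)

theorem scalarLogObjective_norm_le (α : ℝ) (y w : E) :
    scalarLogObjective ‖y‖ α ‖w‖ ≤ vectorLogObjective α y w := by
  have h : (‖w‖ - ‖y‖) ^ 2 ≤ ‖y - w‖ ^ 2 := by
    rw [← sq_abs, norm_sub_rev]
    exact pow_le_pow_left₀ (abs_nonneg _) (abs_norm_sub_norm_le w y) 2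
  unfold scalarLogObjective vectorLogObjective
  linarith

variable [NormedSpace ℝ E]

theorem vectorLogObjective_smul (α : ℝ) (y : E) {c : ℝ} (hc : 0 ≤ c) :
    vectorLogObjective α y (c • y) = scalarLogObjective ‖y‖ α (c * ‖y‖) := by
  have hres : y - c • y = (1 - c) • y := by rw [sub_smul, one_smul]
  unfold vectorLogObjective scalarLogObjective
  rw [hres, norm_smul, norm_smul_of_nonneg hc, Real.norm_eq_abs, mul_pow, sq_abs]
  ring

end Vector

section Matrix

variable {m n : Type*}

def euclideanCol (M : Matrix m n ℝ) (j : n) : EuclideanSpace ℝ m :=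
  WithLp.toLp 2 fun i => M i j

theorem euclideanCol_sub (Y M : Matrix m n ℝ) (j : n) :
    euclideanCol Y j - euclideanCol M j = euclideanCol (Y - M) j := rfl

variable [Fintype m]

theorem norm_sq_euclideanCol (M : Matrix m n ℝ) (j : n) :
    ‖euclideanCol M j‖ ^ 2 = ∑ i, M i j ^ 2 := by
  simp [EuclideanSpace.norm_sq_eq, euclideanCol]

theorem norm_euclideanCol (M : Matrix m n ℝ) (j : n) :
    ‖euclideanCol M j‖ = √(∑ i, M i j ^ 2) := by
  rw [← norm_sq_euclideanCol, sqrt_sq (norm_nonneg _)]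

theorem objective_eq_sum_vectorLogObjective {d k : ℕ} (α : ℝ) (Y M : Matrix (Fin d) (Fin k) ℝ) :
    1 / 2 * (∑ i, ∑ j, (Y i j - M i j) ^ 2) + α * l2logNorm M =
      ∑ j, vectorLogObjective α (euclideanCol Y j) (euclideanCol M j) := by
  simp only [vectorLogObjective, euclideanCol_sub, norm_sq_euclideanCol, Matrix.sub_apply]
  simp only [norm_euclideanCol, l2logNorm, Finset.mul_sum, Finset.sum_add_distrib]
  rw [Finset.sum_comm]

end Matrix

/-- `ℓ_{2,log}`-shrinkage operator: the matrix `W*` built column-wise by the log-shrinkage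
rule globally minimizes `W ↦ (1/2)‖Y - W‖_F² + α ‖W‖_{2,log}`. -/
theorem l2log_shrinkage_operator {d n : ℕ} (Y : Matrix (Fin d) (Fin n) ℝ)
    (α : ℝ) (hα : 0 < α)
    (s : Fin n → ℝ) (hs : ∀ j, s j = Real.sqrt (∑ i, Y i j ^ 2))
    (f : Fin n → ℝ → ℝ)
    (hf : ∀ j x, f j x = (1 / 2) * (x - s j) ^ 2 + α * Real.log (1 + x))
    (ξ : Fin n → ℝ)
    (hξ : ∀ j, ξ j = (s j - 1) / 2 + Real.sqrt ((1 + s j) ^ 2 / 4 - α))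
    (Wstar : Matrix (Fin d) (Fin n) ℝ)
    (hWstar : ∀ i j, Wstar i j =
      if f j (ξ j) ≤ f j 0 ∧ (1 + s j) ^ 2 > 4 * α ∧ 0 < ξ j
      then (ξ j / s j) * Y i j else 0) :
    ∀ W : Matrix (Fin d) (Fin n) ℝ,
      (1 / 2) * (∑ i, ∑ j, (Y i j - Wstar i j) ^ 2) + α * l2logNorm Wstar ≤
        (1 / 2) * (∑ i, ∑ j, (Y i j - W i j) ^ 2) + α * l2logNorm W := by
  intro W
  have hsY : ∀ j, s j = ‖euclideanCol Y j‖ := fun j => by rw [hs, norm_euclideanCol]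
  have hcol : ∀ j, euclideanCol Wstar j = (logShrink (s j) α / s j) • euclideanCol Y j := by
    intro j
    ext i
    have hfj : f j = scalarLogObjective (s j) α := funext (hf j)
    change Wstar i j = logShrink (s j) α / s j * Y i j
    rw [hWstar, hfj, hξ, logShrink, logShrinkRoot]
    split_ifs <;> ring
  rw [objective_eq_sum_vectorLogObjective, objective_eq_sum_vectorLogObjective]
  refine Finset.sum_le_sum fun j _ => ?_
  have hs₀ : 0 ≤ s j := (hsY j).symm ▸ norm_nonneg _
  have hshrink_le := logShrink_le hα.le hs₀
  calc vectorLogObjective α (euclideanCol Y j) (euclideanCol Wstar j)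
      = scalarLogObjective (s j) α (logShrink (s j) α) := by
        rw [hcol, vectorLogObjective_smul _ _ (div_nonneg logShrink_nonneg hs₀), ← hsY,
          div_mul_cancel_of_imp fun h => le_antisymm (h ▸ hshrink_le) logShrink_nonneg]
    _ ≤ scalarLogObjective (s j) α ‖euclideanCol W j‖ := isMinOn_logShrink (norm_nonneg _)
    _ ≤ vectorLogObjective α (euclideanCol Y j) (euclideanCol W j) :=
        hsY j ▸ scalarLogObjective_norm_le α _ _
end

section
/- Let O and L be real d×n matrices, and denote by max(L) and max(O) the maximum entries of L and O, respectively. If max(L) > max(O), then ‖O − L‖_{2,log} ≥ log(1 + max(L) − max(O)). -/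
/-- If the largest entry of `L` exceeds the largest entry of `O`, then
`‖O - L‖_{2,log} ≥ log (1 + max L - max O)`. -/
theorem l2logNorm_coercive {d n : ℕ} (O L : Matrix (Fin d) (Fin n) ℝ)
    (mO mL : ℝ)
    (hmO : IsGreatest {x : ℝ | ∃ i j, O i j = x} mO)
    (hmL : IsGreatest {x : ℝ | ∃ i j, L i j = x} mL)
    (h : mO < mL) :
    Real.log (1 + mL - mO) ≤ l2logNorm (O - L) := by
  obtain ⟨i, j, hij⟩ := hmL.1
  have hOle : O i j ≤ mO := hmO.2 ⟨i, j, rfl⟩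
  have hentry : (mL - mO) ^ 2 ≤ ((O - L) i j) ^ 2 := by
    have h1 : (O - L) i j = O i j - mL := by simp [hij]
    rw [h1]
    have h2 : mL - mO ≤ |O i j - mL| := by
      rw [abs_sub_comm]
      calc mL - mO ≤ mL - O i j := by linarith
        _ ≤ |mL - O i j| := le_abs_self _
    calc (mL - mO) ^ 2 ≤ |O i j - mL| ^ 2 := by
          apply pow_le_pow_left₀ (by linarith) h2
      _ = (O i j - mL) ^ 2 := sq_abs _
  have hcol : mL - mO ≤ Real.sqrt (∑ k, (O - L) k j ^ 2) := by
    have hsum : ((O - L) i j) ^ 2 ≤ ∑ k, (O - L) k j ^ 2 :=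
      Finset.single_le_sum (f := fun k => (O - L) k j ^ 2) (fun k _ => sq_nonneg _) (Finset.mem_univ i)
    calc mL - mO = Real.sqrt ((mL - mO) ^ 2) := (Real.sqrt_sq (by linarith)).symm
      _ ≤ Real.sqrt (∑ k, (O - L) k j ^ 2) :=
          Real.sqrt_le_sqrt (le_trans hentry hsum)
  have hterm : Real.log (1 + mL - mO) ≤
      Real.log (1 + Real.sqrt (∑ k, (O - L) k j ^ 2)) := by
    apply Real.log_le_log (by linarith)
    linarith
  refine le_trans hterm ?_
  unfold l2logNorm
  apply Finset.single_le_sum (fun k _ => ?_) (Finset.mem_univ j)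
  apply Real.log_nonneg
  have := Real.sqrt_nonneg (∑ i, (O - L) i k ^ 2)
  linarith
end
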